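/- Let M be a topological space equipped with a Borel measure μ̂ that is positive on every nonempty open set, let Υ : M → ℝ, let n, k ∈ ℝ with k ≠ n/2, let P and P̂ be ℝ-linear operators on real-valued functions on M such that P̂ is the (n/2+k, n/2-k)-conformal transform of P by Υ, and suppose P̂ is formally self-adjoint with respect to μ̂ (∫ f·(P̂ g) dμ̂ = ∫ (P̂ f)·g dμ̂ for all f, g). Let u : M → ℝ satisfy P u = 0, set û(x) := exp((k-n/2)·Υ(x))·u(x) and v := (2/(n-2k))·P̂ 1. Assume the function û·v is continuous and integrable with respect to μ̂, and that û(x)·v(x) ≥ 0 for all x ∈ M. Then û(x)·v(x) = 0 for all x ∈ M; in particular u·v cannot be everywhere nonnegative and strictly positive at some point. -/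
import Mathlib


open Real MeasureTheory

/-- Theorems 5.4/5.5(1) of the paper: with `P̂` the `(n/2+k, n/2-k)`-conformal
transform of `P` by `Υ`, formally self-adjoint for the measure `μ̂` (which is
positive on nonempty open sets), `P u = 0`, `û = e^{(k-n/2)Υ} u` and
`v = (2/(n-2k)) P̂ 1`: if `û·v` is continuous, integrable and everywhere `≥ 0`,
then `û·v ≡ 0`; in particular `u·v` cannot be nonnegative everywhere and
positive at a point. -/
theorem kernel_times_Qk_cannot_be_nonneg_and_somewhere_pos
    {M : Type*} [TopologicalSpace M] [MeasurableSpace M] [BorelSpace M]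
    (μhat : Measure M) [μhat.IsOpenPosMeasure] (Υ : M → ℝ) (n k : ℝ)
    (hk : k ≠ n / 2)
    (P Phat : (M → ℝ) →ₗ[ℝ] (M → ℝ))
    (hconf : ∀ (f : M → ℝ) (x : M),
      Phat f x = Real.exp (-(n / 2 + k) * Υ x)
        * P (fun y => Real.exp ((n / 2 - k) * Υ y) * f y) x)
    (hsa : ∀ f g : M → ℝ,
      ∫ x, f x * Phat g x ∂μhat = ∫ x, Phat f x * g x ∂μhat)
    (u : M → ℝ) (hu : P u = 0)
    (hcont : Continuous (fun x => (Real.exp ((k - n / 2) * Υ x) * u x)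
        * ((2 / (n - 2 * k)) * Phat (fun _ => (1 : ℝ)) x)))
    (hint : Integrable (fun x => (Real.exp ((k - n / 2) * Υ x) * u x)
        * ((2 / (n - 2 * k)) * Phat (fun _ => (1 : ℝ)) x)) μhat)
    (hnn : ∀ x : M, 0 ≤ (Real.exp ((k - n / 2) * Υ x) * u x)
        * ((2 / (n - 2 * k)) * Phat (fun _ => (1 : ℝ)) x)) :
    ∀ x : M, (Real.exp ((k - n / 2) * Υ x) * u x)
        * ((2 / (n - 2 * k)) * Phat (fun _ => (1 : ℝ)) x) = 0 := by
  set uhat : M → ℝ := fun x => Real.exp ((k - n / 2) * Υ x) * u x with huhat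
  have hPhatu : ∀ x, Phat uhat x = 0 := by
    intro x
    rw [hconf]
    have : (fun y => Real.exp ((n / 2 - k) * Υ y) * uhat y) = u := by
      funext y
      simp only [huhat]
      rw [← mul_assoc, ← Real.exp_add]
      ring_nf
      simp
    rw [this, hu]
    simp
  have hzero : ∫ x, uhat x * Phat (fun _ => (1 : ℝ)) x ∂μhat = 0 := by
    rw [hsa]
    simp only [hPhatu, zero_mul]
    exact integral_zero _ _
  set F : M → ℝ := fun x => uhat x * ((2 / (n - 2 * k)) * Phat (fun _ => (1 : ℝ)) x)
    with hF
  have hintF : ∫ x, F x ∂μhat = 0 := by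
    have : F = fun x => (2 / (n - 2 * k)) * (uhat x * Phat (fun _ => (1 : ℝ)) x) := by
      funext x; simp [hF]; ring
    rw [this, integral_const_mul, hzero, mul_zero]
  have hae : F =ᵐ[μhat] 0 :=
    ((MeasureTheory.integral_eq_zero_iff_of_nonneg
      (fun x => hnn x) hint).mp hintF)
  have : F = 0 := (Continuous.ae_eq_iff_eq μhat hcont continuous_const).mp hae
  intro x
  exact congrFun this x
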